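/- Let f ∈ L¹(ℝ^N) be nonnegative a.e. Then the nonlocal obstacle problem with data f has at most one solution: if w₁, w₂ ∈ L¹(ℝ^N) both satisfy wᵢ ≥ 0 a.e., 0 ≤ f + J∗wᵢ − wᵢ ≤ 1 a.e., and (f + J∗wᵢ − wᵢ − 1)wᵢ = 0 a.e. (i = 1,2), then w₁ = w₂ a.e. -/

import Mathlib

open MeasureTheory Filter
open scoped Topology Pointwise

noncomputable section

abbrev Spc (N : ℕ) := EuclideanSpace ℝ (Fin N)

variable {N : ℕ}

/-- Convolution in the space variable: `(J ∗ v)(x) = ∫ J(x−y) v(y) dy`. -/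
def convol (J v : Spc N → ℝ) : Spc N → ℝ := fun x => ∫ y, J (x - y) * v y

/-- The temperature associated to an enthalpy `g`: `(g − 1)₊`. -/
def tempr (g : Spc N → ℝ) : Spc N → ℝ := fun x => max (g x - 1) 0

/-- Hypotheses on the kernel `J`: continuous, nonnegative, radially symmetric,
supported in the closed ball of radius `RJ > 0`, with unit mass. -/
structure IsKernel (J : Spc N → ℝ) (RJ : ℝ) : Prop where
  cont : Continuous J
  nonneg : ∀ x, 0 ≤ J x
  radial : ∀ x y : Spc N, ‖x‖ = ‖y‖ → J x = J y
  supp_subset : ∀ x : Spc N, RJ < ‖x‖ → J x = 0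
  radius_pos : 0 < RJ
  mass : ∫ x, J x = 1

/-- `u` is an L¹-solution of the nonlocal Stefan problem with initial datum `f`:
a continuous curve in L¹ such that `u(t) = f + ∫₀ᵗ (J∗v(s) − v(s)) ds` with `v = (u−1)₊`. -/
structure IsL1Solution (J f : Spc N → ℝ) (u : ℝ → Spc N → ℝ) : Prop where
  integrable : ∀ t, 0 ≤ t → Integrable (u t)
  contL1 : ∀ t, 0 ≤ t →
    Tendsto (fun s => ∫ x, |u s x - u t x|) (𝓝[Set.Ici (0:ℝ)] t) (𝓝 0)
  eqn : ∀ t, 0 ≤ t → ∀ᵐ x ∂(volume : Measure (Spc N)), u t x =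
    f x + ∫ s in (0:ℝ)..t, (convol J (tempr (u s)) x - tempr (u s) x)

/-- `w` solves the nonlocal obstacle problem with data `f`:
`w ≥ 0`, `0 ≤ f + J∗w − w ≤ 1`, and `(f + J∗w − w − 1) w = 0`, all a.e. -/
structure IsObstacleSol (J f w : Spc N → ℝ) : Prop where
  integrable : Integrable w
  nonneg : ∀ᵐ x ∂(volume : Measure (Spc N)), 0 ≤ w x
  lower : ∀ᵐ x ∂(volume : Measure (Spc N)), 0 ≤ f x + convol J w x - w x
  upper : ∀ᵐ x ∂(volume : Measure (Spc N)), f x + convol J w x - w x ≤ 1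
  compl : ∀ᵐ x ∂(volume : Measure (Spc N)), (f x + convol J w x - w x - 1) * w x = 0

/-! If `w₁, w₂` are two solutions, `g = (w₁ - w₂)₊` satisfies `g ≤ J ∗ g` a.e.: where
`w₁ > w₂ ≥ 0`, complementarity puts `w₁` on the constraint `f + J ∗ w₁ - w₁ = 1`, while
`f + J ∗ w₂ - w₂ ≤ 1`. As `J ∗` preserves integrals, `g = J ∗ g` a.e. Then `h = J ∗ g` is
continuous, vanishes at infinity and satisfies `h = J ∗ h` everywhere. At a positive maximum `a`
of `h` the mean value property forces `h = h a` wherever `J (a - ·) ≠ 0`; as `J` is even, the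
maximum propagates along `a + n • v` for any `v ≠ 0` with `J v ≠ 0`, contradicting the decay.
So `h ≤ 0`, likewise `-h ≤ 0`, and `g = 0` a.e. -/

theorem exists_ne_zero_apply_ne_zero_of_integral_ne_zero {E : Type*} [MeasurableSpace E]
    [Zero E] {μ : Measure E} [NullSingletonClass μ] {J : E → ℝ}
    (hJ : ∫ x, J x ∂μ ≠ 0) : ∃ v ≠ 0, J v ≠ 0 := by
  by_contra! hzero
  refine hJ (integral_eq_zero_of_ae ?_)
  filter_upwards [Measure.ae_ne μ 0] with v hv
  exact hzero v hv

theorem tendsto_add_smul_cocompact {E : Type*} [NormedAddCommGroup E] [NormedSpace ℝ E]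
    [ProperSpace E] (a : E) {v : E} (hv : v ≠ 0) :
    Tendsto (fun n : ℕ => a + (n : ℝ) • v) atTop (cocompact E) := by
  rw [← Metric.cobounded_eq_cocompact, ← tendsto_norm_atTop_iff_cobounded]
  refine tendsto_atTop_mono (fun n => ?_)
    (tendsto_atTop_add_const_right _ (-‖a‖)
      (tendsto_natCast_atTop_atTop.atTop_mul_const (norm_pos_iff.2 hv)))
  calc (n : ℝ) * ‖v‖ + -‖a‖ = ‖(n : ℝ) • v‖ - ‖a‖ := by
        rw [norm_smul, Real.norm_natCast]; ring
    _ ≤ ‖a + (n : ℝ) • v‖ := by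
        have := norm_sub_le (a + (n : ℝ) • v) a
        rw [add_sub_cancel_left] at this
        linarith

namespace IsKernel

variable {J : Spc N → ℝ} {RJ : ℝ}

theorem hasCompactSupport (hJ : IsKernel J RJ) : HasCompactSupport J :=
  .intro (isCompact_closedBall 0 RJ) fun x hx =>
    hJ.supp_subset x (by simpa using hx)

theorem integrable (hJ : IsKernel J RJ) : Integrable J :=
  hJ.cont.integrable_of_hasCompactSupport hJ.hasCompactSupport

theorem apply_neg (hJ : IsKernel J RJ) (x : Spc N) : J (-x) = J x :=
  hJ.radial _ _ (norm_neg x)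

end IsKernel

section Convol

variable {J v w : Spc N → ℝ}

theorem convol_eq_convolution (J v : Spc N → ℝ) :
    convol J v = convolution J v (ContinuousLinearMap.mul ℝ ℝ) volume := by
  ext x
  simp [convol, convolution_eq_swap]

theorem integrable_mul_comp_sub (hJc : Continuous J) (hJs : HasCompactSupport J)
    (hv : Integrable v) (x : Spc N) : Integrable (fun y => J (x - y) * v y) := by
  obtain ⟨C, hC⟩ := hJc.bounded_above_of_compact_support hJs
  exact hv.bdd_mul (hJc.comp (continuous_const.sub continuous_id)).aestronglyMeasurable
    (.of_forall fun y => hC _)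

theorem integrable_convol (hJ : Integrable J) (hv : Integrable v) : Integrable (convol J v) := by
  rw [convol_eq_convolution]
  exact hJ.integrable_convolution _ hv

theorem integral_convol (hJ : Integrable J) (hv : Integrable v) :
    ∫ x, convol J v x = (∫ x, J x) * ∫ x, v x := by
  rw [convol_eq_convolution, integral_convolution _ hJ hv]
  rfl

theorem continuous_convol (hJc : Continuous J) (hJs : HasCompactSupport J)
    (hv : LocallyIntegrable v) : Continuous (convol J v) := by
  rw [convol_eq_convolution]
  exact hJs.continuous_convolution_left _ hJc hv

theorem tendsto_convol_cocompact (hJc : Continuous J) (hJs : HasCompactSupport J)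
    (hv : Integrable v) : Tendsto (convol J v) (cocompact (Spc N)) (𝓝 0) := by
  obtain ⟨C, hC⟩ := hJc.bounded_above_of_compact_support hJs
  rw [← Metric.cobounded_eq_cocompact, ← comap_norm_atTop]
  have hlim := tendsto_integral_filter_of_dominated_convergence (l := comap norm atTop)
    (F := fun x y => J (x - y) * v y) (f := fun _ => 0) (fun y => C * ‖v y‖)
    (.of_forall fun x => (integrable_mul_comp_sub hJc hJs hv x).aestronglyMeasurable)
    (.of_forall fun x => .of_forall fun y => by
      rw [norm_mul]; exact mul_le_mul_of_nonneg_right (hC _) (norm_nonneg _))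
    (hv.norm.const_mul C) (.of_forall fun y => ?_)
  · rwa [integral_zero] at hlim
  · rw [comap_norm_atTop, Metric.cobounded_eq_cocompact]
    simpa using (hJs.is_zero_at_infty.comp
      (Homeomorph.subRight y).isClosedEmbedding.tendsto_cocompact).mul_const (v y)

theorem convol_congr_ae (hvw : v =ᵐ[volume] w) : convol J v = convol J w := by
  ext x
  exact integral_congr_ae (hvw.mono fun y hy => by simp only [hy])

theorem convol_neg (J v : Spc N → ℝ) : convol J (-v) = -convol J v := by
  ext x
  simp [convol, integral_neg]

theorem convol_sub (hJc : Continuous J) (hJs : HasCompactSupport J) (hv : Integrable v)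
    (hw : Integrable w) (x : Spc N) : convol J (v - w) x = convol J v x - convol J w x := by
  simp only [convol, Pi.sub_apply, mul_sub]
  exact integral_sub (integrable_mul_comp_sub hJc hJs hv x) (integrable_mul_comp_sub hJc hJs hw x)

theorem convol_nonneg (hJ0 : ∀ x, 0 ≤ J x) (hv : ∀ y, 0 ≤ v y) (x : Spc N) : 0 ≤ convol J v x :=
  integral_nonneg fun y => mul_nonneg (hJ0 _) (hv y)

theorem convol_mono (hJc : Continuous J) (hJs : HasCompactSupport J) (hJ0 : ∀ x, 0 ≤ J x)
    (hv : Integrable v) (hw : Integrable w) (hvw : ∀ y, v y ≤ w y) (x : Spc N) :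
    convol J v x ≤ convol J w x :=
  integral_mono (integrable_mul_comp_sub hJc hJs hv x) (integrable_mul_comp_sub hJc hJs hw x)
    fun y => mul_le_mul_of_nonneg_left (hvw y) (hJ0 _)

theorem ae_eq_convol_of_ae_le_convol (hJ : Integrable J) (hJ1 : ∫ x, J x = 1)
    (hv : Integrable v) (hle : v ≤ᵐ[volume] convol J v) : v =ᵐ[volume] convol J v :=
  (integral_eq_iff_of_ae_le hv (integrable_convol hJ hv) hle).1
    (by rw [integral_convol hJ hv, hJ1, one_mul])

end Convol

section MaximumPrinciple

variable {J h : Spc N → ℝ}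

theorem apply_eq_of_forall_le_of_convol_eq (hJc : Continuous J) (hJs : HasCompactSupport J)
    (hJ0 : ∀ x, 0 ≤ J x) (hJ1 : ∫ x, J x = 1) (hh : Continuous h) {a y : Spc N}
    (hmax : ∀ z, h z ≤ h a) (hfix : convol J h a = h a) (hy : J (a - y) ≠ 0) : h y = h a := by
  have hJa : Continuous fun z => J (a - z) := hJc.comp (continuous_const.sub continuous_id)
  have hJas : HasCompactSupport fun z => J (a - z) := hJs.comp_homeomorph (Homeomorph.subLeft a)
  have hJh : Integrable fun z => J (a - z) * h z :=
    (hJa.mul hh).integrable_of_hasCompactSupport hJas.mul_right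
  have hJha : Integrable fun z => J (a - z) * h a :=
    (hJa.mul continuous_const).integrable_of_hasCompactSupport hJas.mul_right
  set φ : Spc N → ℝ := fun z => J (a - z) * (h a - h z)
  have hφ_integral : ∫ z, φ z = 0 := by
    simp only [φ, mul_sub]
    rw [integral_sub hJha hJh, integral_mul_const, integral_sub_left_eq_self J volume a, hJ1,
      one_mul]
    exact sub_eq_zero.2 hfix.symm
  have hφ_ae : φ =ᵐ[volume] 0 := (integral_eq_zero_iff_of_nonneg
    (fun z => mul_nonneg (hJ0 _) (sub_nonneg.2 (hmax z))) (hJha.sub hJh |>.congr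
      (.of_forall fun z => (mul_sub _ _ _).symm))).1 hφ_integral
  have hφ : φ = 0 :=
    ((hJa.mul (continuous_const.sub hh)).ae_eq_iff_eq volume continuous_const).1 hφ_ae
  have hφy : J (a - y) * (h a - h y) = 0 := congrFun hφ y
  linarith [(mul_eq_zero.1 hφy).resolve_left hy]

theorem le_zero_of_convol_eq_self (hN : 1 ≤ N) {RJ : ℝ} (hJ : IsKernel J RJ) (hh : Continuous h)
    (hdecay : Tendsto h (cocompact (Spc N)) (𝓝 0)) (hfix : ∀ x, convol J h x = h x)
    (x : Spc N) : h x ≤ 0 := by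
  by_contra! hx
  obtain ⟨a, ha⟩ := hh.exists_forall_ge' x (hdecay.eventually (ge_mem_nhds hx))
  have : Nonempty (Fin N) := ⟨⟨0, hN⟩⟩
  obtain ⟨v, hv0, hv⟩ := exists_ne_zero_apply_ne_zero_of_integral_ne_zero (μ := volume)
    (hJ.mass ▸ one_ne_zero)
  have h_orbit : ∀ n : ℕ, h (a + (n : ℝ) • v) = h a := by
    intro n
    induction n with
    | zero => simp
    | succ n ih =>
      rw [← ih]
      refine apply_eq_of_forall_le_of_convol_eq hJ.cont hJ.hasCompactSupport hJ.nonneg hJ.mass hh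
        (ih ▸ ha) (hfix _) ?_
      rwa [show a + (n : ℝ) • v - (a + ((n + 1 : ℕ) : ℝ) • v) = -v by push_cast; module,
        hJ.apply_neg]
  have h_lim := hdecay.comp (tendsto_add_smul_cocompact a hv0)
  simp only [Function.comp_def, h_orbit] at h_lim
  linarith [ha x, tendsto_nhds_unique h_lim tendsto_const_nhds]

theorem eq_zero_of_convol_eq_self (hN : 1 ≤ N) {RJ : ℝ} (hJ : IsKernel J RJ) (hh : Continuous h)
    (hdecay : Tendsto h (cocompact (Spc N)) (𝓝 0)) (hfix : ∀ x, convol J h x = h x)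
    (x : Spc N) : h x = 0 := by
  have hneg := le_zero_of_convol_eq_self hN hJ hh.neg (by rw [← neg_zero]; exact hdecay.neg)
    (fun x => by rw [convol_neg, Pi.neg_apply, Pi.neg_apply, hfix]) x
  linarith [le_zero_of_convol_eq_self hN hJ hh hdecay hfix x, neg_nonpos.1 hneg]

end MaximumPrinciple

theorem ae_eq_zero_of_ae_eq_convol (hN : 1 ≤ N) {J g : Spc N → ℝ} {RJ : ℝ} (hJ : IsKernel J RJ)
    (hg : Integrable g) (hfix : g =ᵐ[volume] convol J g) : g =ᵐ[volume] 0 := by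
  have hconvol_zero : convol J g = 0 := funext <| eq_zero_of_convol_eq_self hN hJ
    (continuous_convol hJ.cont hJ.hasCompactSupport hg.locallyIntegrable)
    (tendsto_convol_cocompact hJ.cont hJ.hasCompactSupport hg)
    (fun x => by rw [convol_congr_ae hfix.symm])
  rwa [hconvol_zero] at hfix

namespace IsObstacleSol

variable {J f w₁ w₂ : Spc N → ℝ}

theorem sub_le_convol_sub (hw₁ : IsObstacleSol J f w₁) (hw₂ : IsObstacleSol J f w₂) :
    ∀ᵐ x ∂volume, w₂ x < w₁ x → w₁ x - w₂ x ≤ convol J w₁ x - convol J w₂ x := by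
  filter_upwards [hw₂.nonneg, hw₁.compl, hw₂.upper] with x h₂ hcompl hupper hlt
  have hcontact : f x + convol J w₁ x - w₁ x - 1 = 0 :=
    (mul_eq_zero.1 hcompl).resolve_right (h₂.trans_lt hlt).ne'
  linarith

theorem ae_le (hN : 1 ≤ N) {RJ : ℝ} (hJ : IsKernel J RJ) (hw₁ : IsObstacleSol J f w₁)
    (hw₂ : IsObstacleSol J f w₂) : w₁ ≤ᵐ[volume] w₂ := by
  set g : Spc N → ℝ := fun x => max (w₁ x - w₂ x) 0
  have hg : Integrable g := (hw₁.integrable.sub hw₂.integrable).pos_part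
  have hle : g ≤ᵐ[volume] convol J g := by
    filter_upwards [hw₁.sub_le_convol_sub hw₂] with x hx
    rcases le_or_gt (w₁ x) (w₂ x) with hle | hlt
    · exact (max_eq_right (sub_nonpos.2 hle)).trans_le
        (convol_nonneg hJ.nonneg (fun y => le_max_right _ _) x)
    · calc g x = w₁ x - w₂ x := max_eq_left (sub_nonneg.2 hlt.le)
        _ ≤ convol J w₁ x - convol J w₂ x := hx hlt
        _ = convol J (w₁ - w₂) x :=
          (convol_sub hJ.cont hJ.hasCompactSupport hw₁.integrable hw₂.integrable x).symm
        _ ≤ convol J g x := convol_mono hJ.cont hJ.hasCompactSupport hJ.nonneg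
          (hw₁.integrable.sub hw₂.integrable) hg (fun y => le_max_left _ _) x
  have hg_zero : g =ᵐ[volume] 0 := ae_eq_zero_of_ae_eq_convol hN hJ hg
    (ae_eq_convol_of_ae_le_convol hJ.integrable hJ.mass hg hle)
  filter_upwards [hg_zero] with x hx
  linarith [le_max_left (w₁ x - w₂ x) 0, show g x = 0 from hx]

end IsObstacleSol

theorem nonlocal_obstacle_uniqueness_general
    (N : ℕ) (hN : 1 ≤ N) (J : Spc N → ℝ) (RJ : ℝ) (hJ : IsKernel J RJ)
    (f : Spc N → ℝ)
    (w₁ w₂ : Spc N → ℝ)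
    (hw₁ : IsObstacleSol J f w₁) (hw₂ : IsObstacleSol J f w₂) :
    w₁ =ᵐ[(volume : Measure (Spc N))] w₂ :=
  (hw₁.ae_le hN hJ hw₂).antisymm (hw₂.ae_le hN hJ hw₁)

/-- Uniqueness for the nonlocal obstacle problem: for nonnegative
`f ∈ L¹(ℝ^N)`, any two solutions coincide a.e. -/
theorem nonlocal_obstacle_uniqueness
    (N : ℕ) (hN : 1 ≤ N) (J : Spc N → ℝ) (RJ : ℝ) (hJ : IsKernel J RJ)
    (f : Spc N → ℝ) (hf : Integrable f)
    (hf0 : ∀ᵐ x ∂(volume : Measure (Spc N)), 0 ≤ f x)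
    (w₁ w₂ : Spc N → ℝ)
    (hw₁ : IsObstacleSol J f w₁) (hw₂ : IsObstacleSol J f w₂) :
    w₁ =ᵐ[(volume : Measure (Spc N))] w₂ :=
  nonlocal_obstacle_uniqueness_general N hN J RJ hJ f w₁ w₂ hw₁ hw₂
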